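/- For N ≥ 4 and α > 0, the operator norm of G = I − α(A_F L¹)^{−1}L^{qcf} on U equipped with the U^{2,∞} norm equals |1 − α(1 − 2φ''_{2F}/A_F)| + α|2φ''_{2F}/A_F|. -/

import Mathlib

/-- Discrete Dirichlet Laplacian. -/
noncomputable def L1 (ε : ℝ) (v : ℤ → ℝ) (j : ℤ) : ℝ :=
  (-v (j + 1) + 2 * v j - v (j - 1)) / ε ^ 2

/-- Linearized atomistic operator. -/
noncomputable def La (ε φF φ2F : ℝ) (v : ℤ → ℝ) (j : ℤ) : ℝ :=
  φF * ((-v (j + 1) + 2 * v j - v (j - 1)) / ε ^ 2)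
    + φ2F * ((-v (j + 2) + 2 * v j - v (j - 2)) / ε ^ 2)

/-- Linearized force-based QC operator. -/
noncomputable def Lqcf (K : ℕ) (ε φF φ2F : ℝ) (v : ℤ → ℝ) (j : ℤ) : ℝ :=
  if |j| ≤ (K : ℤ) then La ε φF φ2F v j else (φF + 4 * φ2F) * L1 ε v j

/-- The U^{2,∞} norm: max of |u''_ℓ| over ℓ = -N+1,…,N-1. -/
noncomputable def U2inf (N : ℕ) (ε : ℝ) (u : ℤ → ℝ) : ℝ :=
  ⨆ ℓ : Finset.Icc (-(N : ℤ) + 1) ((N : ℤ) - 1),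
    |(u ((ℓ : ℤ) + 1) - 2 * u (ℓ : ℤ) + u ((ℓ : ℤ) - 1)) / ε ^ 2|

/-!
Write `d = u''` on the interior nodes. Solving the constraint for `z''` turns `(u - z)''` into `T d`,
where `T` is the tridiagonal operator of the key computation, with `β = φ''_{2F} / A_F`: it multiplies
by `1 - α` on continuum rows and has entries `(-αβ, 1 - α(1 - 2β), -αβ)` on atomistic rows. Because
`K ≤ N - 2`, atomistic rows only see interior nodes, so the `U^{2,∞}` operator norm is the `ℓ^∞`
operator norm of `T`: its largest absolute row sum `|1 - α(1 - 2β)| + 2α|β|`, which dominates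
`|1 - α|` by the triangle inequality. Since `β ≤ 0`, row `0` attains this bound at the vector
`d = 1` except `d₀ = sign(1 - α(1 - 2β))`, and every `d` is the second difference of some `u ∈ U`
(discrete Green's function).
-/

open Finset

namespace QCF

noncomputable def green (N : ℕ) (j ℓ : ℤ) : ℝ :=
  if j ≤ ℓ then ((j : ℝ) + N) * ((ℓ : ℝ) - N) / (2 * N)
  else ((ℓ : ℝ) + N) * ((j : ℝ) - N) / (2 * N)

theorem green_secondDiff {N : ℕ} (hN : N ≠ 0) (j ℓ : ℤ) :
    green N (j + 1) ℓ - 2 * green N j ℓ + green N (j - 1) ℓ = if j = ℓ then 1 else 0 := by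
  have hN' : (N : ℝ) ≠ 0 := by exact_mod_cast hN
  rcases lt_trichotomy j ℓ with h | rfl | h
  · simp only [green, if_pos (show j + 1 ≤ ℓ by omega), if_pos h.le, if_pos (show j - 1 ≤ ℓ by omega),
      if_neg h.ne]
    push_cast
    field_simp
    ring
  · simp only [green, if_neg (show ¬j + 1 ≤ j by omega), le_refl, if_pos (show j - 1 ≤ j by omega),
      if_true]
    push_cast
    field_simp
    ring
  · rcases eq_or_lt_of_le (show ℓ + 1 ≤ j by omega) with rfl | h'
    · simp only [green, if_neg (show ¬ℓ + 1 + 1 ≤ ℓ by omega), if_neg (show ¬ℓ + 1 ≤ ℓ by omega),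
        add_sub_cancel_right, le_refl, if_true, if_neg (show ℓ + 1 ≠ ℓ by omega)]
      push_cast
      field_simp
      ring
    · simp only [green, if_neg (show ¬j + 1 ≤ ℓ by omega), if_neg (show ¬j ≤ ℓ by omega),
        if_neg (show ¬j - 1 ≤ ℓ by omega), if_neg h.ne']
      push_cast
      field_simp
      ring

theorem green_neg_self {N : ℕ} {ℓ : ℤ} (hℓ : -(N : ℤ) ≤ ℓ) : green N (-N) ℓ = 0 := by
  simp [green, hℓ]

theorem green_self {N : ℕ} {ℓ : ℤ} (hℓ : ℓ < N) : green N N ℓ = 0 := by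
  simp [green, not_le.mpr hℓ]

noncomputable def dirichletSolution (N : ℕ) (b : ℤ → ℝ) (j : ℤ) : ℝ :=
  if (N : ℤ) ≤ |j| then 0 else ∑ ℓ ∈ Icc (-(N : ℤ) + 1) (N - 1), b ℓ * green N j ℓ

theorem dirichletSolution_eq_zero {N : ℕ} (b : ℤ → ℝ) {j : ℤ} (hj : (N : ℤ) ≤ |j|) :
    dirichletSolution N b j = 0 :=
  if_pos hj

theorem dirichletSolution_eq_sum {N : ℕ} (b : ℤ → ℝ) {j : ℤ} (hj : |j| ≤ N) :
    dirichletSolution N b j = ∑ ℓ ∈ Icc (-(N : ℤ) + 1) (N - 1), b ℓ * green N j ℓ := by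
  rw [dirichletSolution]
  split_ifs with h
  · have hj' : j = N ∨ j = -N := by rcases abs_cases j with ⟨h1, _⟩ | ⟨h1, _⟩ <;> omega
    refine (sum_eq_zero fun ℓ hℓ => ?_).symm
    rw [mem_Icc] at hℓ
    rcases hj' with rfl | rfl
    · rw [green_self (by omega), mul_zero]
    · rw [green_neg_self (by omega), mul_zero]
  · rfl

theorem dirichletSolution_secondDiff {N : ℕ} (b : ℤ → ℝ) {j : ℤ}
    (hj : j ∈ Icc (-(N : ℤ) + 1) (N - 1)) :
    dirichletSolution N b (j + 1) - 2 * dirichletSolution N b j + dirichletSolution N b (j - 1)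
      = b j := by
  have hj' := mem_Icc.mp hj
  rw [dirichletSolution_eq_sum b (abs_le.mpr ⟨by omega, by omega⟩),
    dirichletSolution_eq_sum b (abs_le.mpr ⟨by omega, by omega⟩),
    dirichletSolution_eq_sum b (abs_le.mpr ⟨by omega, by omega⟩), mul_sum,
    ← sum_sub_distrib, ← sum_add_distrib]
  simp_rw [← mul_assoc, mul_comm (2 : ℝ), mul_assoc, ← mul_sub, ← mul_add,
    green_secondDiff (show N ≠ 0 by omega), mul_ite, mul_one, mul_zero, sum_ite_eq, if_pos hj]

noncomputable def secondDiff (ε : ℝ) (u : ℤ → ℝ) (ℓ : ℤ) : ℝ :=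
  (u (ℓ + 1) - 2 * u ℓ + u (ℓ - 1)) / ε ^ 2

theorem exists_secondDiff_eq {ε : ℝ} (hε : ε ≠ 0) (N : ℕ) (d : ℤ → ℝ) :
    ∃ u : ℤ → ℝ, (∀ j, (N : ℤ) ≤ |j| → u j = 0) ∧
      ∀ j ∈ Icc (-(N : ℤ) + 1) (N - 1), secondDiff ε u j = d j := by
  refine ⟨dirichletSolution N (fun j => ε ^ 2 * d j), fun j => dirichletSolution_eq_zero _,
    fun j hj => ?_⟩
  rw [secondDiff, dirichletSolution_secondDiff _ hj]
  field_simp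

theorem secondDiff_sub (ε : ℝ) (u z : ℤ → ℝ) (ℓ : ℤ) :
    secondDiff ε (u - z) ℓ = secondDiff ε u ℓ - secondDiff ε z ℓ := by
  simp only [secondDiff, Pi.sub_apply]
  ring

theorem L1_eq_neg_secondDiff (ε : ℝ) (v : ℤ → ℝ) (j : ℤ) : L1 ε v j = -secondDiff ε v j := by
  rw [L1, secondDiff]
  ring

theorem La_eq_secondDiff (ε φF φ2F : ℝ) (v : ℤ → ℝ) (j : ℤ) :
    La ε φF φ2F v j = -(φF + 4 * φ2F) * secondDiff ε v j
      + φ2F * (2 * secondDiff ε v j - secondDiff ε v (j - 1) - secondDiff ε v (j + 1)) := by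
  simp only [La, secondDiff, show j + 1 + 1 = j + 2 by ring, show j - 1 - 1 = j - 2 by ring,
    add_sub_cancel_right, sub_add_cancel]
  ring

theorem U2inf_nonneg (N : ℕ) (ε : ℝ) (u : ℤ → ℝ) : 0 ≤ U2inf N ε u :=
  Real.iSup_nonneg fun _ => abs_nonneg _

theorem abs_secondDiff_le_U2inf {N : ℕ} (ε : ℝ) (u : ℤ → ℝ) {ℓ : ℤ}
    (hℓ : ℓ ∈ Icc (-(N : ℤ) + 1) (N - 1)) : |secondDiff ε u ℓ| ≤ U2inf N ε u :=
  le_ciSup (f := fun i : Icc (-(N : ℤ) + 1) (N - 1) => |secondDiff ε u i|)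
    (Set.finite_range _).bddAbove ⟨ℓ, hℓ⟩

theorem U2inf_le {N : ℕ} {ε M : ℝ} {u : ℤ → ℝ} (hM : 0 ≤ M)
    (h : ∀ ℓ ∈ Icc (-(N : ℤ) + 1) (N - 1), |secondDiff ε u ℓ| ≤ M) : U2inf N ε u ≤ M :=
  Real.iSup_le (fun ℓ => h ℓ ℓ.2) hM

/-- The operator `-L¹ G (-L¹)⁻¹` of the key computation, acting on `d = u''`;
`β` stands for `φ''_{2F} / A_F`. -/
noncomputable def precondAction (K : ℕ) (α β : ℝ) (d : ℤ → ℝ) (ℓ : ℤ) : ℝ :=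
  if |ℓ| ≤ (K : ℤ) then (1 - α * (1 - 2 * β)) * d ℓ - α * β * (d (ℓ - 1) + d (ℓ + 1))
  else (1 - α) * d ℓ

theorem secondDiff_sub_eq_precondAction {K : ℕ} {ε φF φ2F α : ℝ} (hA : φF + 4 * φ2F ≠ 0)
    {u z : ℤ → ℝ} {ℓ : ℤ} (hz : (φF + 4 * φ2F) * L1 ε z ℓ = α * Lqcf K ε φF φ2F u ℓ) :
    secondDiff ε (u - z) ℓ = precondAction K α (φ2F / (φF + 4 * φ2F)) (secondDiff ε u) ℓ := by
  have hz' : secondDiff ε z ℓ = -(α * Lqcf K ε φF φ2F u ℓ) / (φF + 4 * φ2F) := by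
    rw [eq_div_iff hA, ← hz, L1_eq_neg_secondDiff]
    ring
  rw [secondDiff_sub, hz', precondAction, Lqcf]
  split_ifs
  · rw [La_eq_secondDiff]
    field_simp
    ring
  · rw [L1_eq_neg_secondDiff]
    field_simp

theorem abs_one_sub_le_rowSum (α β : ℝ) (hα : 0 ≤ α) :
    |1 - α| ≤ |1 - α * (1 - 2 * β)| + α * |2 * β| :=
  calc |1 - α| = |(1 - α * (1 - 2 * β)) - α * (2 * β)| := by ring_nf
    _ ≤ |1 - α * (1 - 2 * β)| + |α * (2 * β)| := abs_sub _ _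
    _ = |1 - α * (1 - 2 * β)| + α * |2 * β| := by rw [abs_mul, abs_of_nonneg hα]

theorem abs_precondAction_le {N K : ℕ} (hK : K + 2 ≤ N) {α β R : ℝ} (hα : 0 ≤ α) {d : ℤ → ℝ}
    (hd : ∀ i ∈ Icc (-(N : ℤ) + 1) (N - 1), |d i| ≤ R) {ℓ : ℤ}
    (hℓ : ℓ ∈ Icc (-(N : ℤ) + 1) (N - 1)) :
    |precondAction K α β d ℓ| ≤ (|1 - α * (1 - 2 * β)| + α * |2 * β|) * R := by
  have hℓR := hd ℓ hℓ
  have hR : 0 ≤ R := (abs_nonneg _).trans hℓR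
  rw [precondAction]
  split_ifs with hA
  · obtain ⟨hℓ₁, hℓ₂⟩ := abs_le.mp hA
    have hprev := hd (ℓ - 1) (mem_Icc.mpr ⟨by omega, by omega⟩)
    have hnext := hd (ℓ + 1) (mem_Icc.mpr ⟨by omega, by omega⟩)
    calc |(1 - α * (1 - 2 * β)) * d ℓ - α * β * (d (ℓ - 1) + d (ℓ + 1))|
        ≤ |1 - α * (1 - 2 * β)| * |d ℓ| + α * |β| * (|d (ℓ - 1)| + |d (ℓ + 1)|) := by
          refine (abs_sub _ _).trans (add_le_add (abs_mul _ _).le ?_)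
          rw [abs_mul, abs_mul, abs_of_nonneg hα]
          gcongr
          exact abs_add_le _ _
      _ ≤ |1 - α * (1 - 2 * β)| * R + α * |β| * (R + R) := by gcongr
      _ = (|1 - α * (1 - 2 * β)| + α * |2 * β|) * R := by rw [abs_mul, abs_two]; ring
  · calc |(1 - α) * d ℓ| = |1 - α| * |d ℓ| := abs_mul _ _
      _ ≤ (|1 - α * (1 - 2 * β)| + α * |2 * β|) * R :=
          mul_le_mul (abs_one_sub_le_rowSum α β hα) hℓR (abs_nonneg _) (by positivity)

theorem precondAction_at_zero (K : ℕ) {α β : ℝ} (hβ : β ≤ 0) {d : ℤ → ℝ}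
    (h₀ : d 0 = SignType.sign (1 - α * (1 - 2 * β))) (hprev : d (-1) = 1) (hnext : d 1 = 1) :
    precondAction K α β d 0 = |1 - α * (1 - 2 * β)| + α * |2 * β| := by
  simp only [precondAction, abs_zero, Nat.cast_nonneg, if_true, zero_sub, zero_add, h₀, hprev,
    hnext, self_mul_sign, abs_of_nonpos (by linarith : 2 * β ≤ 0)]
  ring

theorem U2inf_sub_le {N K : ℕ} (hK : K + 2 ≤ N) {ε φF φ2F α : ℝ} (hA : φF + 4 * φ2F ≠ 0)
    (hα : 0 ≤ α) {u z : ℤ → ℝ}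
    (hz : ∀ j ∈ Icc (-(N : ℤ) + 1) (N - 1),
      (φF + 4 * φ2F) * L1 ε z j = α * Lqcf K ε φF φ2F u j) :
    U2inf N ε (u - z) ≤ (|1 - α * (1 - 2 * (φ2F / (φF + 4 * φ2F)))|
      + α * |2 * (φ2F / (φF + 4 * φ2F))|) * U2inf N ε u := by
  refine U2inf_le (by positivity [U2inf_nonneg N ε u]) fun ℓ hℓ => ?_
  rw [secondDiff_sub_eq_precondAction hA (hz ℓ hℓ)]
  exact abs_precondAction_le hK hα (fun i hi => abs_secondDiff_le_U2inf ε u hi) hℓ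

theorem exists_U2inf_eq_one {N : ℕ} (hN : 2 ≤ N) {ε : ℝ} (hε : ε ≠ 0) {s : ℝ} (hs : |s| ≤ 1) :
    ∃ u : ℤ → ℝ, (∀ j, (N : ℤ) ≤ |j| → u j = 0) ∧ U2inf N ε u = 1 ∧
      secondDiff ε u 0 = s ∧ secondDiff ε u (-1) = 1 ∧ secondDiff ε u 1 = 1 := by
  obtain ⟨u, hu₀, hu⟩ := exists_secondDiff_eq hε N fun j => if j = 0 then s else 1
  have hmem : ∀ j : ℤ, |j| ≤ 1 → j ∈ Icc (-(N : ℤ) + 1) (N - 1) := fun j hj =>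
    mem_Icc.mpr ⟨by linarith [(abs_le.mp hj).1], by linarith [(abs_le.mp hj).2]⟩
  have hu_one : ∀ j : ℤ, |j| = 1 → secondDiff ε u j = 1 := fun j hj => by
    rw [hu j (hmem j hj.le), if_neg (by rintro rfl; simp at hj)]
  refine ⟨u, hu₀, le_antisymm (U2inf_le zero_le_one fun j hj => ?_) ?_,
    by simpa using hu 0 (hmem 0 (by simp)), hu_one _ (by simp), hu_one _ (by simp)⟩
  · rw [hu j hj]
    split_ifs
    exacts [hs, by simp]
  · simpa [hu_one 1 (by simp)] using abs_secondDiff_le_U2inf ε u (hmem 1 (by simp))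

theorem exists_L1_eq_Lqcf {ε φF φ2F : ℝ} (hε : ε ≠ 0) (hA : φF + 4 * φ2F ≠ 0) (N K : ℕ) (α : ℝ)
    (u : ℤ → ℝ) :
    ∃ z : ℤ → ℝ, (∀ j, (N : ℤ) ≤ |j| → z j = 0) ∧ ∀ j ∈ Icc (-(N : ℤ) + 1) (N - 1),
      (φF + 4 * φ2F) * L1 ε z j = α * Lqcf K ε φF φ2F u j := by
  obtain ⟨z, hz₀, hz⟩ := exists_secondDiff_eq hε N fun j =>
    -(α * Lqcf K ε φF φ2F u j) / (φF + 4 * φ2F)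
  refine ⟨z, hz₀, fun j hj => ?_⟩
  rw [L1_eq_neg_secondDiff, hz j hj]
  field_simp

theorem abs_sign_le_one {R : Type*} [Ring R] [LinearOrder R] [IsStrictOrderedRing R] (x : R) :
    |(SignType.sign x : R)| ≤ 1 := by
  rcases SignType.sign x with _ | _ | _ <;> simp

end QCF

open QCF in
theorem qcl_preconditioner_norm_U2inf_general
    (N K : ℕ) (hK : K + 2 ≤ N) (ε φF φ2F α : ℝ)
    (hε : ε = 1 / N) (hAF : 0 < φF + 4 * φ2F) (hφ : φ2F ≤ 0) (hα : 0 < α) :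
    IsLUB {r : ℝ | ∃ u z : ℤ → ℝ,
        (∀ j : ℤ, (N : ℤ) ≤ |j| → u j = 0) ∧
        (∀ j : ℤ, (N : ℤ) ≤ |j| → z j = 0) ∧
        (∀ j ∈ Finset.Icc (-(N : ℤ) + 1) ((N : ℤ) - 1),
          (φF + 4 * φ2F) * L1 ε z j = α * Lqcf K ε φF φ2F u j) ∧
        U2inf N ε u = 1 ∧ r = U2inf N ε (u - z)}
      (|1 - α * (1 - 2 * φ2F / (φF + 4 * φ2F))| + α * |2 * φ2F / (φF + 4 * φ2F)|) := by
  have hε0 : ε ≠ 0 := hε ▸ one_div_ne_zero (Nat.cast_ne_zero.mpr (by omega))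
  have hA := hAF.ne'
  have hβ : φ2F / (φF + 4 * φ2F) ≤ 0 := div_nonpos_of_nonpos_of_nonneg hφ hAF.le
  simp only [mul_div_assoc]
  refine ⟨?_, fun w hw => hw ?_⟩
  · rintro r ⟨u, z, -, -, hz, hu, rfl⟩
    simpa [hu] using U2inf_sub_le hK hA hα.le hz
  obtain ⟨u, hu₀, hu, hu_zero, hu_prev, hu_next⟩ :=
    exists_U2inf_eq_one (show 2 ≤ N by omega) hε0
      (abs_sign_le_one (1 - α * (1 - 2 * (φ2F / (φF + 4 * φ2F)))))
  obtain ⟨z, hz₀, hz⟩ := exists_L1_eq_Lqcf hε0 hA N K α u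
  have h0 : (0 : ℤ) ∈ Icc (-(N : ℤ) + 1) (N - 1) := mem_Icc.mpr ⟨by omega, by omega⟩
  refine ⟨u, z, hu₀, hz₀, hz, hu, le_antisymm ?_ ?_⟩
  · calc _ = secondDiff ε (u - z) 0 := by
          rw [secondDiff_sub_eq_precondAction hA (hz 0 h0),
            precondAction_at_zero K hβ hu_zero hu_prev hu_next]
      _ ≤ |secondDiff ε (u - z) 0| := le_abs_self _
      _ ≤ U2inf N ε (u - z) := abs_secondDiff_le_U2inf ε _ h0
  · simpa [hu] using U2inf_sub_le hK hA hα.le hz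

/-- the U^{2,∞} operator norm of G = I − α(A_F L¹)⁻¹ L^{qcf}
equals |1 − α(1 − 2φ2F/A_F)| + α|2φ2F/A_F|. -/
theorem qcl_preconditioner_norm_U2inf
    (N K : ℕ) (hN : 4 ≤ N) (hK : K + 2 ≤ N) (ε φF φ2F α : ℝ)
    (hε : ε = 1 / N) (hAF : 0 < φF + 4 * φ2F) (hφ : φ2F ≤ 0) (hα : 0 < α) :
    IsLUB {r : ℝ | ∃ u z : ℤ → ℝ,
        (∀ j : ℤ, (N : ℤ) ≤ |j| → u j = 0) ∧
        (∀ j : ℤ, (N : ℤ) ≤ |j| → z j = 0) ∧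
        (∀ j ∈ Finset.Icc (-(N : ℤ) + 1) ((N : ℤ) - 1),
          (φF + 4 * φ2F) * L1 ε z j = α * Lqcf K ε φF φ2F u j) ∧
        U2inf N ε u = 1 ∧ r = U2inf N ε (u - z)}
      (|1 - α * (1 - 2 * φ2F / (φF + 4 * φ2F))| + α * |2 * φ2F / (φF + 4 * φ2F)|) :=
  qcl_preconditioner_norm_U2inf_general N K hK ε φF φ2F α hε hAF hφ hα
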